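/- arXiv:2404.13328 — 7 statements merged into one kernel-verified Lean document; each statement's English description precedes it below -/
import Mathlib

section
/- Let f₁,…,fₙ : ℝ^d → ℝ be differentiable, convex and L-smooth (L > 0), let f = (1/n)·Σᵢ₌₁ⁿ fᵢ, fix points x, w ∈ ℝ^d and set gᵢ = ∇fᵢ(x) − ∇fᵢ(w). Let Y₁,…,Yₙ be independent square-integrable random vectors in ℝ^d on a common probability space satisfying E[Yᵢ] = gᵢ and E[‖Yᵢ‖²] ≤ ω‖gᵢ‖² for some ω ≥ 1. Then E[‖(1/n)·Σᵢ₌₁ⁿ Yᵢ + ∇f(w) − ∇f(x)‖²] ≤ (2Lω/n)·(f(w) − f(x) − ⟨∇f(x), w − x⟩). -/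
/-!
Since `E[Yᵢ] = gᵢ` and `∇f(w) − ∇f(x) = −(1/n)·∑ᵢ gᵢ`, the estimator error is `(1/n)·∑ᵢ (Yᵢ − E[Yᵢ])`.
Independence kills the cross terms, so its second moment is `(1/n²)·∑ᵢ E‖Yᵢ − E[Yᵢ]‖²`, and
`E‖Yᵢ − E[Yᵢ]‖² ≤ E‖Yᵢ‖² ≤ ω‖gᵢ‖²`. Co-coercivity of a convex `L`-smooth function bounds `‖gᵢ‖²` by
`2L` times the Bregman divergence `D_{fᵢ}(w, x)`, and these divergences average to `D_f(w, x)`.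
-/

open MeasureTheory ProbabilityTheory
open scoped RealInnerProductSpace

section Bregman

variable {E : Type*} [NormedAddCommGroup E] [InnerProductSpace ℝ E] [CompleteSpace E]

noncomputable def bregmanDiv (φ : E → ℝ) (w x : E) : ℝ := φ w - φ x - ⟪gradient φ x, w - x⟫

theorem gradient_const_mul_sum {ι : Type*} (s : Finset ι) (c : ℝ) {φ : ι → E → ℝ} {u : E}
    (hφ : ∀ i ∈ s, DifferentiableAt ℝ (φ i) u) :
    gradient (fun v => c * ∑ i ∈ s, φ i v) u = c • ∑ i ∈ s, gradient (φ i) u := by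
  have hsum : HasGradientAt (fun v => ∑ i ∈ s, φ i v) (∑ i ∈ s, gradient (φ i) u) u := by
    rw [hasGradientAt_iff_hasFDerivAt, map_sum]
    exact HasFDerivAt.fun_sum fun i hi => (hφ i hi).hasGradientAt.hasFDerivAt
  refine HasGradientAt.gradient ?_
  rw [hasGradientAt_iff_hasFDerivAt] at hsum ⊢
  simpa using hsum.const_mul c

theorem bregmanDiv_const_mul_sum {ι : Type*} (s : Finset ι) (c : ℝ) {φ : ι → E → ℝ} {w x : E}
    (hφ : ∀ i ∈ s, DifferentiableAt ℝ (φ i) x) :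
    bregmanDiv (fun v => c * ∑ i ∈ s, φ i v) w x = c * ∑ i ∈ s, bregmanDiv (φ i) w x := by
  simp only [bregmanDiv, gradient_const_mul_sum s c hφ, real_inner_smul_left, sum_inner,
    Finset.sum_sub_distrib]
  ring

theorem ConvexOn.bregmanDiv_nonneg {φ : E → ℝ} (hc : ConvexOn ℝ Set.univ φ) {x : E}
    (hd : DifferentiableAt ℝ φ x) (w : E) : 0 ≤ bregmanDiv φ w x := by
  set ψ : ℝ → ℝ := fun t => φ (AffineMap.lineMap x w t)
  have hψc : ConvexOn ℝ Set.univ ψ := hc.comp_affineMap (AffineMap.lineMap x w)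
  have hψd : HasDerivAt ψ ⟪gradient φ x, w - x⟫ 0 :=
    hd.hasGradientAt.hasFDerivAt.comp_hasDerivAt_of_eq 0 AffineMap.hasDerivAt_lineMap (by simp)
  have hslope := hψc.le_slope_of_hasDerivAt (Set.mem_univ 0) (Set.mem_univ 1) one_pos hψd
  simp only [slope_def_field, ψ, AffineMap.lineMap_apply_zero, AffineMap.lineMap_apply_one,
    sub_zero, div_one] at hslope
  unfold bregmanDiv
  linarith

/-- Co-coercivity: compare the first-order lower bound at `x` with the smoothness upper bound at
`w`, both evaluated at the gradient step `w - L⁻¹ • (∇φ w - ∇φ x)`. -/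
theorem ConvexOn.sq_norm_gradient_sub_le_bregmanDiv {φ : E → ℝ} (hc : ConvexOn ℝ Set.univ φ)
    {x : E} (hd : DifferentiableAt ℝ φ x) {L : ℝ} (hL : 0 < L)
    (hs : ∀ u v, φ v ≤ φ u + ⟪gradient φ u, v - u⟫ + L / 2 * ‖v - u‖ ^ 2) (w : E) :
    ‖gradient φ x - gradient φ w‖ ^ 2 ≤ 2 * L * bregmanDiv φ w x := by
  set G := gradient φ w - gradient φ x
  set z := w - L⁻¹ • G
  have hlow := hc.bregmanDiv_nonneg hd z
  have hup := hs w z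
  have hG : ⟪gradient φ w, G⟫ - ⟪gradient φ x, G⟫ = ‖G‖ ^ 2 := by
    rw [← inner_sub_left, real_inner_self_eq_norm_sq]
  simp only [bregmanDiv, z, sub_sub_cancel_left, sub_right_comm w _ x, inner_sub_right,
    inner_neg_right, inner_smul_right, norm_neg, norm_smul, mul_pow, Real.norm_eq_abs,
    sq_abs] at hlow hup ⊢
  rw [norm_sub_rev]
  field_simp at hup hlow
  nlinarith

end Bregman

section SecondMoments

variable {Ω E : Type*} {mΩ : MeasurableSpace Ω} {μ : Measure Ω}
  [NormedAddCommGroup E] [InnerProductSpace ℝ E]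

theorem MeasureTheory.MemLp.integrable_inner {X Y : Ω → E} (hX : MemLp X 2 μ)
    (hY : MemLp Y 2 μ) : Integrable (fun ω => ⟪X ω, Y ω⟫) μ :=
  memLp_one_iff_integrable.1 <| hX.of_bilin (fun u v => ⟪u, v⟫) 1 hY (hX.1.inner hY.1)
    (ae_of_all _ fun ω => by simpa using nnnorm_inner_le_nnnorm (𝕜 := ℝ) (X ω) (Y ω))

variable [CompleteSpace E]

theorem integral_norm_sub_integral_sq [IsProbabilityMeasure μ] {X : Ω → E} (hX : MemLp X 2 μ) :
    ∫ ω, ‖X ω - μ[X]‖ ^ 2 ∂μ = ∫ ω, ‖X ω‖ ^ 2 ∂μ - ‖μ[X]‖ ^ 2 := by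
  have hX1 : Integrable X μ := hX.integrable one_le_two
  have hsq : Integrable (fun ω => ‖X ω‖ ^ 2) μ := hX.integrable_norm_pow two_ne_zero
  have hcross : Integrable (fun ω => 2 * ⟪X ω, μ[X]⟫) μ := (hX1.inner_const _).const_mul 2
  have hmean : ∫ ω, ⟪X ω, μ[X]⟫ ∂μ = ‖μ[X]‖ ^ 2 := by
    simp_rw [real_inner_comm (μ[X])]
    rw [integral_inner hX1, real_inner_self_eq_norm_sq]
  simp_rw [norm_sub_sq_real]
  rw [integral_add (by exact hsq.sub hcross) (integrable_const _), integral_sub hsq hcross,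
    integral_const_mul, hmean]
  simp
  ring

variable [MeasurableSpace E] [BorelSpace E]

theorem ProbabilityTheory.IndepFun.integral_inner {X Y : Ω → E} (h : IndepFun X Y μ)
    (hX : Integrable X μ) (hY : Integrable Y μ) :
    ∫ ω, ⟪X ω, Y ω⟫ ∂μ = ⟪μ[X], μ[Y]⟫ :=
  h.integral_bilin hX hY (innerSL ℝ)

theorem integral_norm_sum_sq_of_integral_eq_zero [IsFiniteMeasure μ] {ι : Type*} [Fintype ι]
    {Z : ι → Ω → E} (hZ : ∀ i, MemLp (Z i) 2 μ)
    (hindep : Pairwise fun i j => IndepFun (Z i) (Z j) μ) (hmean : ∀ i, μ[Z i] = 0) :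
    ∫ ω, ‖∑ i, Z i ω‖ ^ 2 ∂μ = ∑ i, ∫ ω, ‖Z i ω‖ ^ 2 ∂μ := by
  classical
  have hcross : ∀ i j, ∫ ω, ⟪Z i ω, Z j ω⟫ ∂μ = if i = j then ∫ ω, ‖Z i ω‖ ^ 2 ∂μ else 0 := by
    intro i j
    split_ifs with hij
    · simp [hij]
    · rw [(hindep hij).integral_inner ((hZ i).integrable one_le_two)
        ((hZ j).integrable one_le_two), hmean i, inner_zero_left]
  simp_rw [← real_inner_self_eq_norm_sq, sum_inner, inner_sum]
  rw [integral_finsetSum _ fun i _ =>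
    integrable_finsetSum _ fun j _ => (hZ i).integrable_inner (hZ j)]
  simp_rw [integral_finsetSum _ fun j _ => (hZ _).integrable_inner (hZ j), hcross]
  simp

theorem integral_norm_sum_sub_integral_sq [IsProbabilityMeasure μ] {ι : Type*} [Fintype ι]
    {X : ι → Ω → E} (hX : ∀ i, MemLp (X i) 2 μ)
    (hindep : Pairwise fun i j => IndepFun (X i) (X j) μ) :
    ∫ ω, ‖∑ i, (X i ω - μ[X i])‖ ^ 2 ∂μ = ∑ i, ∫ ω, ‖X i ω - μ[X i]‖ ^ 2 ∂μ :=
  integral_norm_sum_sq_of_integral_eq_zero (fun i => (hX i).sub (memLp_const _))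
    (fun _ _ hij => (hindep hij).comp (continuous_sub_right _).measurable
      (continuous_sub_right _).measurable)
    (fun i => by simp [integral_sub ((hX i).integrable one_le_two) (integrable_const _)])

end SecondMoments

theorem dhpl_katyusha_variance_bound_general
    {d n : ℕ} {L : ℝ} (hL : 0 < L)
    (f : Fin n → EuclideanSpace ℝ (Fin d) → ℝ)
    (hdiff : ∀ i, Differentiable ℝ (f i))
    (hconv : ∀ i, ConvexOn ℝ Set.univ (f i))
    (hsmooth : ∀ i, ∀ u v : EuclideanSpace ℝ (Fin d),
      f i v ≤ f i u + ⟪gradient (f i) u, v - u⟫ + L / 2 * ‖v - u‖ ^ 2)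
    (F : EuclideanSpace ℝ (Fin d) → ℝ)
    (hF : F = fun u => (1 / (n : ℝ)) * ∑ i, f i u)
    (x w : EuclideanSpace ℝ (Fin d))
    (g : Fin n → EuclideanSpace ℝ (Fin d))
    (hg : ∀ i, g i = gradient (f i) x - gradient (f i) w)
    {Ω : Type*} [MeasureSpace Ω] [IsProbabilityMeasure (ℙ : Measure Ω)]
    (Y : Fin n → Ω → EuclideanSpace ℝ (Fin d))
    (hY2 : ∀ i, MemLp (Y i) 2 ℙ)
    (hYindep : iIndepFun Y ℙ)
    {ω₀ : ℝ} (hω₀ : 1 ≤ ω₀)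
    (hYmean : ∀ i, ∫ a, Y i a ∂ℙ = g i)
    (hYsecond : ∀ i, ∫ a, ‖Y i a‖ ^ 2 ∂ℙ ≤ ω₀ * ‖g i‖ ^ 2) :
    ∫ a, ‖(1 / (n : ℝ)) • ∑ i, Y i a + gradient F w - gradient F x‖ ^ 2 ∂ℙ
      ≤ 2 * L * ω₀ / n * (F w - F x - ⟪gradient F x, w - x⟫) := by
  have hgradF : ∀ u, gradient F u = (1 / (n : ℝ)) • ∑ i, gradient (f i) u := fun u => by
    rw [hF, gradient_const_mul_sum _ _ fun i _ => hdiff i u]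
  have hbregF : F w - F x - ⟪gradient F x, w - x⟫ = 1 / n * ∑ i, bregmanDiv (f i) w x := by
    rw [hF, ← bregmanDiv_const_mul_sum _ _ fun i _ => hdiff i x]
    rfl
  have hcentre : ∀ a, (1 / (n : ℝ)) • ∑ i, Y i a + gradient F w - gradient F x
      = (1 / (n : ℝ)) • ∑ i, (Y i a - ∫ a, Y i a ∂ℙ) := fun a => by
    simp only [hgradF, hYmean, hg, Finset.sum_sub_distrib]
    module
  have hterm : ∀ i, ∫ a, ‖Y i a - ∫ a, Y i a ∂ℙ‖ ^ 2 ∂ℙ ≤ ω₀ * (2 * L * bregmanDiv (f i) w x) :=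
    fun i => calc
      _ = ∫ a, ‖Y i a‖ ^ 2 ∂ℙ - ‖∫ a, Y i a ∂ℙ‖ ^ 2 := integral_norm_sub_integral_sq (hY2 i)
      _ ≤ ω₀ * ‖g i‖ ^ 2 := (sub_le_self _ (sq_nonneg _)).trans (hYsecond i)
      _ ≤ ω₀ * (2 * L * bregmanDiv (f i) w x) := by
        rw [hg]
        gcongr
        exact (hconv i).sq_norm_gradient_sub_le_bregmanDiv (hdiff i x) hL (hsmooth i) w
  simp_rw [hcentre, norm_smul, mul_pow]
  rw [integral_const_mul, integral_norm_sum_sub_integral_sq hY2 fun i j hij => hYindep.indepFun hij,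
    hbregF]
  calc ‖1 / (n : ℝ)‖ ^ 2 * ∑ i, ∫ a, ‖Y i a - ∫ a, Y i a ∂ℙ‖ ^ 2 ∂ℙ
      ≤ ‖1 / (n : ℝ)‖ ^ 2 * ∑ i, ω₀ * (2 * L * bregmanDiv (f i) w x) := by
        gcongr with i
        exact hterm i
    _ = 2 * L * ω₀ / n * (1 / n * ∑ i, bregmanDiv (f i) w x) := by
        rw [← Finset.mul_sum, ← Finset.mul_sum, norm_div, norm_one, Real.norm_natCast]
        ring

/-- **Variance bound for the compressed gradient estimator of DHPL-Katyusha**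
(efficient Lipschitz constant `L̃ = L·ω/n`): if `f₁, …, fₙ : ℝ^d → ℝ` are differentiable,
convex and `L`-smooth, `f = (1/n)·∑ᵢ fᵢ`, `gᵢ = ∇fᵢ(x) − ∇fᵢ(w)`, and `Y₁, …, Yₙ` are
independent square-integrable random vectors with `E[Yᵢ] = gᵢ` and `E[‖Yᵢ‖²] ≤ ω·‖gᵢ‖²`
for some `ω ≥ 1`, then
`E[‖(1/n)·∑ᵢ Yᵢ + ∇f(w) − ∇f(x)‖²] ≤ (2Lω/n)·(f(w) − f(x) − ⟨∇f(x), w − x⟩)`. -/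
theorem dhpl_katyusha_variance_bound
    {d n : ℕ} (hn : 0 < n) {L : ℝ} (hL : 0 < L)
    (f : Fin n → EuclideanSpace ℝ (Fin d) → ℝ)
    (hdiff : ∀ i, Differentiable ℝ (f i))
    (hconv : ∀ i, ConvexOn ℝ Set.univ (f i))
    (hsmooth : ∀ i, ∀ u v : EuclideanSpace ℝ (Fin d),
      f i v ≤ f i u + ⟪gradient (f i) u, v - u⟫ + L / 2 * ‖v - u‖ ^ 2)
    (F : EuclideanSpace ℝ (Fin d) → ℝ)
    (hF : F = fun u => (1 / (n : ℝ)) * ∑ i, f i u)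
    (x w : EuclideanSpace ℝ (Fin d))
    (g : Fin n → EuclideanSpace ℝ (Fin d))
    (hg : ∀ i, g i = gradient (f i) x - gradient (f i) w)
    {Ω : Type*} [MeasureSpace Ω] [IsProbabilityMeasure (ℙ : Measure Ω)]
    (Y : Fin n → Ω → EuclideanSpace ℝ (Fin d))
    (hYmeas : ∀ i, Measurable (Y i))
    (hY2 : ∀ i, MemLp (Y i) 2 ℙ)
    (hYindep : iIndepFun Y ℙ)
    {ω₀ : ℝ} (hω₀ : 1 ≤ ω₀)
    (hYmean : ∀ i, ∫ a, Y i a ∂ℙ = g i)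
    (hYsecond : ∀ i, ∫ a, ‖Y i a‖ ^ 2 ∂ℙ ≤ ω₀ * ‖g i‖ ^ 2) :
    ∫ a, ‖(1 / (n : ℝ)) • ∑ i, Y i a + gradient F w - gradient F x‖ ^ 2 ∂ℙ
      ≤ 2 * L * ω₀ / n * (F w - F x - ⟪gradient F x, w - x⟫) :=
  dhpl_katyusha_variance_bound_general hL f hdiff hconv hsmooth F hF x w g hg Y hY2 hYindep hω₀
    hYmean hYsecond
end

section
/- Let n divide d with 1 ≤ n ≤ d, and let (B₁,…,Bₙ) be a uniformly random ordered partition of Fin d into n blocks each of size d/n (obtained from a uniformly random permutation of Fin d). For a₁,…,aₙ ∈ ℝ^d define the random vectors Qᵢ(aᵢ) ∈ ℝ^d by (Qᵢ(aᵢ))_t = n·(aᵢ)_t if t ∈ Bᵢ and 0 otherwise, and let ā = (1/n)·Σᵢ₌₁ⁿ aᵢ. Then E[(1/n)·Σᵢ₌₁ⁿ Qᵢ(aᵢ)] = ā and E[‖(1/n)·Σᵢ₌₁ⁿ Qᵢ(aᵢ) − ā‖²] ≤ (1/n)·Σᵢ₌₁ⁿ ‖aᵢ‖². -/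
open MeasureTheory ProbabilityTheory
open scoped RealInnerProductSpace ENNReal

/-- Discrete σ-algebra on the permutation group, used to speak of a uniformly random
permutation. -/
instance permMeasurableSpace (α : Type*) : MeasurableSpace (Equiv.Perm α) := ⊤

/-- The block of worker `i` in the ordered partition of `Fin d` into `n` consecutive blocks
of size `d / n`, permuted by `π` : coordinate `t` belongs to block `i` iff
`⌊π⁻¹(t) / (d/n)⌋ = i`. -/
def permKBlockMem {d : ℕ} (n : ℕ) (π : Equiv.Perm (Fin d)) (i : ℕ) (t : Fin d) : Prop :=
  ((π.symm t : ℕ) / (d / n)) = i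

instance {d n : ℕ} (π : Equiv.Perm (Fin d)) (i : ℕ) (t : Fin d) :
    Decidable (permKBlockMem n π i t) := by unfold permKBlockMem; infer_instance

/-- The PermK compression operator of worker `i` given the permutation `π` : it keeps the
coordinates lying in worker `i`'s block rescaled by `n`, and zeros out the others. -/
noncomputable def permKvec {d : ℕ} (n : ℕ) (π : Equiv.Perm (Fin d)) (i : ℕ)
    (a : EuclideanSpace ℝ (Fin d)) : EuclideanSpace ℝ (Fin d) :=
  WithLp.toLp 2 (fun t => if permKBlockMem n π i t then (n : ℝ) * a t else 0)

/-!
Coordinate `t` of `(1/n) • ∑ᵢ Qᵢ(aᵢ)` is coordinate `t` of `a_J`, where `J` is the block that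
contains `t`. Since `π⁻¹ t` is uniform on `Fin d` and all blocks have size `d / n`, `J` is uniform
on `Fin n`. Hence the compressed average is `a_J` coordinatewise, with mean `ā` and
`E ‖a_J - ā‖² = (1/n) ∑ᵢ ‖aᵢ - ā‖²`, which is at most `(1/n) ∑ᵢ ‖aᵢ‖²` because `ā` is the mean.
-/

open Finset Equiv
open scoped Nat

theorem integral_comp_eq_smul_sum_of_uniform {Ω α E : Type*} [MeasurableSpace Ω]
    {μ : Measure Ω} [IsFiniteMeasure μ] [Fintype α] [MeasurableSpace α] [DiscreteMeasurableSpace α]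
    [NormedAddCommGroup E] [NormedSpace ℝ E] [CompleteSpace E]
    {X : Ω → α} (hX : Measurable X) {p : ℝ≥0∞} (hunif : ∀ x, μ {ω | X ω = x} = p) (f : α → E) :
    ∫ ω, f (X ω) ∂μ = p.toReal • ∑ x, f x := by
  rw [← integral_map hX.aemeasurable .of_discrete, integral_fintype .of_finite, smul_sum]
  refine sum_congr rfl fun x _ => ?_
  rw [measureReal_def, Measure.map_apply hX (.singleton x)]
  exact congrArg (·.toReal • f x) (hunif x)

theorem sum_perm_symm_apply_eq {α M : Type*} [Fintype α] [DecidableEq α] [AddCommMonoid M]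
    (g : α → M) (a b : α) : ∑ σ : Perm α, g (σ.symm a) = ∑ σ : Perm α, g (σ.symm b) :=
  Fintype.sum_equiv (Equiv.mulLeft (swap a b)) _ _ fun σ => by simp [Perm.mul_def]

theorem card_smul_sum_perm_symm_apply {α M : Type*} [Fintype α] [DecidableEq α] [AddCommMonoid M]
    (g : α → M) (a : α) :
    Fintype.card α • ∑ σ : Perm α, g (σ.symm a) = (Fintype.card α)! • ∑ b, g b := calc
  _ = ∑ b : α, ∑ σ : Perm α, g (σ.symm b) := by
    rw [← Finset.card_univ, ← sum_const]
    exact sum_congr rfl fun b _ => sum_perm_symm_apply_eq g a b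
  _ = ∑ σ : Perm α, ∑ b, g b := by
    rw [sum_comm]; exact sum_congr rfl fun σ _ => σ.symm.sum_comp g
  _ = _ := by rw [sum_const, Finset.card_univ, Fintype.card_perm]

def blockIndex {n d : ℕ} (hdvd : n ∣ d) (s : Fin d) : Fin n :=
  ⟨s / (d / n), Nat.div_lt_of_lt_mul (by rw [Nat.div_mul_cancel hdvd]; exact s.isLt)⟩

theorem sum_blockIndex {M : Type*} [AddCommMonoid M] {n d : ℕ} (hdvd : n ∣ d) (g : Fin n → M) :
    ∑ s : Fin d, g (blockIndex hdvd s) = (d / n) • ∑ i, g i := by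
  rcases n.eq_zero_or_pos with rfl | hn
  · simpa using sum_eq_zero fun s _ => (blockIndex hdvd s).elim0
  obtain ⟨k, rfl⟩ := hdvd
  have hblock : ∀ (i : Fin n) (j : Fin k), blockIndex ⟨k, rfl⟩ (finProdFinEquiv (i, j)) = i :=
    fun i j => Fin.ext <| by
      simp only [blockIndex, finProdFinEquiv_apply_val, Nat.mul_div_cancel_left k hn]
      rw [Nat.add_mul_div_left _ _ j.pos, Nat.div_eq_of_lt j.isLt, zero_add]
  rw [← finProdFinEquiv.sum_comp, Fintype.sum_prod_type]
  simp [hblock, Nat.mul_div_cancel_left k hn, smul_sum]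

theorem average_perm_blockIndex_symm_apply {n d : ℕ} (hdvd : n ∣ d) (t : Fin d) (g : Fin n → ℝ) :
    (d ! : ℝ)⁻¹ * ∑ σ : Perm (Fin d), g (blockIndex hdvd (σ.symm t)) = (1 / n : ℝ) * ∑ i, g i := by
  have hd : 0 < d := t.pos
  have hn : 0 < n := Nat.pos_of_dvd_of_pos hdvd hd
  have h := card_smul_sum_perm_symm_apply (fun s => g (blockIndex hdvd s)) t
  rw [sum_blockIndex, Fintype.card_fin, nsmul_eq_mul, nsmul_eq_mul, nsmul_eq_mul,
    Nat.cast_div hdvd (by positivity),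
    show (d ! : ℝ) * (d / n * ∑ i, g i) = d * (d ! / n * ∑ i, g i) by ring] at h
  rw [mul_left_cancel₀ (by positivity) h]
  field_simp

section PermK

variable {d n : ℕ} (hdvd : n ∣ d)

noncomputable def permKMerge (π : Perm (Fin d)) (a : Fin n → EuclideanSpace ℝ (Fin d)) :
    EuclideanSpace ℝ (Fin d) :=
  WithLp.toLp 2 fun t => a (blockIndex hdvd (π.symm t)) t

theorem permKBlockMem_iff (π : Perm (Fin d)) (i : Fin n) (t : Fin d) :
    permKBlockMem n π i t ↔ blockIndex hdvd (π.symm t) = i := by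
  simp [permKBlockMem, blockIndex, Fin.ext_iff]

theorem one_div_smul_sum_permKvec (π : Perm (Fin d)) (a : Fin n → EuclideanSpace ℝ (Fin d)) :
    (1 / n : ℝ) • ∑ i : Fin n, permKvec n π i (a i) = permKMerge hdvd π a := by
  ext t
  have hn : (n : ℝ) ≠ 0 := Nat.cast_ne_zero.2 (Nat.pos_of_dvd_of_pos hdvd t.pos).ne'
  simp [permKvec, permKMerge, permKBlockMem_iff hdvd, hn]

theorem permKMerge_sub (π : Perm (Fin d)) (a : Fin n → EuclideanSpace ℝ (Fin d))
    (b : EuclideanSpace ℝ (Fin d)) :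
    permKMerge hdvd π a - b = permKMerge hdvd π (fun i => a i - b) := rfl

theorem average_perm_permKMerge (a : Fin n → EuclideanSpace ℝ (Fin d)) :
    (d ! : ℝ)⁻¹ • ∑ π, permKMerge hdvd π a = (1 / n : ℝ) • ∑ i, a i := by
  ext t
  simpa [permKMerge] using average_perm_blockIndex_symm_apply hdvd t (fun i => a i t)

theorem average_perm_norm_permKMerge_sq (a : Fin n → EuclideanSpace ℝ (Fin d)) :
    (d ! : ℝ)⁻¹ * ∑ π, ‖permKMerge hdvd π a‖ ^ 2 = (1 / n : ℝ) * ∑ i, ‖a i‖ ^ 2 := by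
  simp_rw [EuclideanSpace.real_norm_sq_eq]
  rw [sum_comm, sum_comm (s := univ) (t := univ) (γ := Fin n), mul_sum, mul_sum]
  exact sum_congr rfl fun t _ => average_perm_blockIndex_symm_apply hdvd t (fun i => a i t ^ 2)

end PermK

theorem sum_norm_sub_average_sq_le {ι E : Type*} [Fintype ι] [NormedAddCommGroup E]
    [InnerProductSpace ℝ E] (a : ι → E) :
    ∑ i, ‖a i - (1 / Fintype.card ι : ℝ) • ∑ j, a j‖ ^ 2 ≤ ∑ i, ‖a i‖ ^ 2 := by
  rcases isEmpty_or_nonempty ι with hι | hι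
  · simp
  set m := (1 / Fintype.card ι : ℝ) • ∑ j, a j
  have hsum : ∑ j, a j = (Fintype.card ι : ℝ) • m := by
    rw [smul_smul, mul_one_div_cancel (by positivity), one_smul]
  have hexpand : ∑ i, ‖a i - m‖ ^ 2 = ∑ i, ‖a i‖ ^ 2 - Fintype.card ι * ‖m‖ ^ 2 := by
    simp_rw [norm_sub_sq_real, sum_add_distrib, sum_sub_distrib, ← mul_sum, ← sum_inner, hsum,
      real_inner_smul_left, real_inner_self_eq_norm_sq, sum_const, card_univ, nsmul_eq_mul]
    ring
  rw [hexpand]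
  exact sub_le_self _ (by positivity)

theorem permK_unbiased_and_AB_inequality_general
    {d n : ℕ} (hdvd : n ∣ d)
    {Ω : Type*} [MeasureSpace Ω] [IsProbabilityMeasure (ℙ : Measure Ω)]
    (π : Ω → Equiv.Perm (Fin d)) (hπmeas : Measurable π)
    (hπunif : ∀ τ : Equiv.Perm (Fin d), ℙ {a | π a = τ} = ((d.factorial : ℝ≥0∞))⁻¹)
    (a : Fin n → EuclideanSpace ℝ (Fin d))
    (abar : EuclideanSpace ℝ (Fin d)) (habar : abar = (1 / (n : ℝ)) • ∑ i, a i) :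
    (∫ ω, (1 / (n : ℝ)) • ∑ i : Fin n, permKvec n (π ω) (i : ℕ) (a i) ∂ℙ) = abar ∧
    (∫ ω, ‖(1 / (n : ℝ)) • ∑ i : Fin n, permKvec n (π ω) (i : ℕ) (a i) - abar‖ ^ 2 ∂ℙ)
      ≤ (1 / (n : ℝ)) * ∑ i, ‖a i‖ ^ 2 := by
  have hp : ((d ! : ℝ≥0∞)⁻¹).toReal = (d ! : ℝ)⁻¹ := by simp
  simp_rw [one_div_smul_sum_permKvec hdvd, permKMerge_sub]
  refine ⟨?_, ?_⟩
  · rw [integral_comp_eq_smul_sum_of_uniform hπmeas hπunif (permKMerge hdvd · a), hp,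
      average_perm_permKMerge, habar]
  · calc _ = 1 / n * ∑ i, ‖a i - abar‖ ^ 2 := by
          rw [integral_comp_eq_smul_sum_of_uniform hπmeas hπunif
            (‖permKMerge hdvd · fun i => a i - abar‖ ^ 2), hp, smul_eq_mul,
            average_perm_norm_permKMerge_sq]
      _ ≤ 1 / n * ∑ i, ‖a i‖ ^ 2 := by
          refine mul_le_mul_of_nonneg_left ?_ (by positivity)
          simpa [habar] using sum_norm_sub_average_sq_le a

/-- **Unbiasedness and AB-inequality (with `A = 1`, `B = 0` dropped) for the PermK
compressors**: if `n ∣ d`, `1 ≤ n ≤ d`, `(B₁, …, Bₙ)` is a uniformly random ordered partition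
of `Fin d` into `n` blocks of size `d/n` (obtained from a uniformly random permutation), and
`Qᵢ(aᵢ)` keeps the coordinates of `aᵢ` in `Bᵢ` rescaled by `n`, then
`E[(1/n)·∑ᵢ Qᵢ(aᵢ)] = ā` and `E[‖(1/n)·∑ᵢ Qᵢ(aᵢ) − ā‖²] ≤ (1/n)·∑ᵢ ‖aᵢ‖²`,
where `ā = (1/n)·∑ᵢ aᵢ`. -/
theorem permK_unbiased_and_AB_inequality
    {d n : ℕ} (hn : 1 ≤ n) (hnd : n ≤ d) (hdvd : n ∣ d)
    {Ω : Type*} [MeasureSpace Ω] [IsProbabilityMeasure (ℙ : Measure Ω)]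
    (π : Ω → Equiv.Perm (Fin d)) (hπmeas : Measurable π)
    (hπunif : ∀ τ : Equiv.Perm (Fin d), ℙ {a | π a = τ} = ((d.factorial : ℝ≥0∞))⁻¹)
    (a : Fin n → EuclideanSpace ℝ (Fin d))
    (abar : EuclideanSpace ℝ (Fin d)) (habar : abar = (1 / (n : ℝ)) • ∑ i, a i) :
    (∫ ω, (1 / (n : ℝ)) • ∑ i : Fin n, permKvec n (π ω) (i : ℕ) (a i) ∂ℙ) = abar ∧
    (∫ ω, ‖(1 / (n : ℝ)) • ∑ i : Fin n, permKvec n (π ω) (i : ℕ) (a i) - abar‖ ^ 2 ∂ℙ)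
      ≤ (1 / (n : ℝ)) * ∑ i, ‖a i‖ ^ 2 :=
  permK_unbiased_and_AB_inequality_general hdvd π hπmeas hπunif a abar habar
end

section
/- Let E be a real inner product space, let μ > 0, L̃ > 0, η > 0, and set σ = μ/L̃. For any g, x, z, x* ∈ E define z⁺ = (1/(1 + ησ))·(ησ·x + z − (η/L̃)·g). Then ⟨g, x* − z⁺⟩ + (μ/2)·‖x − x*‖² ≥ (L̃/(2η))·‖z − z⁺‖² + (L̃(1 + ησ)/(2η))·‖z⁺ − x*‖² − (L̃/(2η))·‖z − x*‖². -/
/-!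
The point `z⁺` minimises `y ↦ ⟪g, y⟫ + μ/2 ‖x - y‖² + L̃/(2η) ‖z - y‖²`, so the optimality
condition reads `g = μ (x - z⁺) + (L̃/η) (z - z⁺)`. Pairing it with `x* - z⁺` and expanding both
inner products by the three-point identity `2⟪a - c, b - c⟫ = ‖a - c‖² + ‖b - c‖² - ‖a - b‖²`
turns the claim into an identity up to the term `μ/2 ‖x - z⁺‖² ≥ 0`; the coefficients match
because `L̃ (1 + ησ)/η = L̃/η + μ`.
-/

open scoped RealInnerProductSpace

section

variable {E : Type*} [NormedAddCommGroup E] [InnerProductSpace ℝ E]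

theorem two_mul_real_inner_sub_sub_eq (a b c : E) :
    2 * ⟪a - c, b - c⟫ = ‖a - c‖ ^ 2 + ‖b - c‖ ^ 2 - ‖a - b‖ ^ 2 := by
  rw [show a - b = (a - c) - (b - c) by abel, norm_sub_sq_real (a - c) (b - c)]
  ring

theorem real_inner_sub_add_half_norm_sq_eq_of_eq_smul_add_smul {μ c : ℝ} {g x z u w : E}
    (hg : g = μ • (x - u) + c • (z - u)) :
    ⟪g, w - u⟫ + μ / 2 * ‖x - w‖ ^ 2
      = c / 2 * ‖z - u‖ ^ 2 + (c + μ) / 2 * ‖u - w‖ ^ 2 - c / 2 * ‖z - w‖ ^ 2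
        + μ / 2 * ‖x - u‖ ^ 2 := by
  have hx := two_mul_real_inner_sub_sub_eq x w u
  have hz := two_mul_real_inner_sub_sub_eq z w u
  rw [hg, inner_add_left, real_inner_smul_left, real_inner_smul_left, norm_sub_rev u w]
  linear_combination (μ / 2) * hx + (c / 2) * hz

theorem eq_smul_sub_add_smul_sub_of_eq_prox_step {μ L η σ : ℝ} (hL : L ≠ 0) (hη : η ≠ 0)
    (hσ : σ = μ / L) (hc : 1 + η * σ ≠ 0) {g x z u : E}
    (hu : u = (1 / (1 + η * σ)) • ((η * σ) • x + z - (η / L) • g)) :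
    g = μ • (x - u) + (L / η) • (z - u) := by
  have hu' : (1 + η * σ) • u = (η * σ) • x + z - (η / L) • g := by
    rw [hu, smul_smul, mul_one_div_cancel hc, one_smul]
  subst hσ
  linear_combination (norm := skip) (L / η) • hu'
  match_scalars <;> field_simp <;> ring

end

/-- **The z-update (proximal step) inequality of the DHPL-Katyusha analysis** (revised
Lemma 7 of L-Katyusha with the efficient Lipschitz constant `L̃`): in a real inner product
space, for `μ, L̃, η > 0`, `σ = μ/L̃` and
`z⁺ = (1/(1 + ησ))·(ησ·x + z − (η/L̃)·g)`, one has
`⟨g, x* − z⁺⟩ + (μ/2)·‖x − x*‖² ≥ (L̃/(2η))·‖z − z⁺‖²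
  + (L̃(1 + ησ)/(2η))·‖z⁺ − x*‖² − (L̃/(2η))·‖z − x*‖²`. -/
theorem dhpl_katyusha_z_update_inequality
    {E : Type*} [NormedAddCommGroup E] [InnerProductSpace ℝ E]
    {μ Ltil η σ : ℝ} (hμ : 0 < μ) (hL : 0 < Ltil) (hη : 0 < η)
    (hσ : σ = μ / Ltil)
    (g x z xstar zplus : E)
    (hzplus : zplus = (1 / (1 + η * σ)) • ((η * σ) • x + z - (η / Ltil) • g)) :
    ⟪g, xstar - zplus⟫ + μ / 2 * ‖x - xstar‖ ^ 2
      ≥ Ltil / (2 * η) * ‖z - zplus‖ ^ 2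
        + Ltil * (1 + η * σ) / (2 * η) * ‖zplus - xstar‖ ^ 2
        - Ltil / (2 * η) * ‖z - xstar‖ ^ 2 := by
  have hσ_pos : 0 < σ := hσ ▸ div_pos hμ hL
  have hg := eq_smul_sub_add_smul_sub_of_eq_prox_step hL.ne' hη.ne' hσ (by positivity) hzplus
  have hhalf : Ltil / η / 2 = Ltil / (2 * η) := by ring
  have hcoef : (Ltil / η + μ) / 2 = Ltil * (1 + η * σ) / (2 * η) := by
    rw [hσ]; field_simp
  rw [ge_iff_le, real_inner_sub_add_half_norm_sq_eq_of_eq_smul_add_smul hg, hhalf, hcoef]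
  have : 0 ≤ μ / 2 * ‖x - zplus‖ ^ 2 := by positivity
  linarith
end

section
/- Let f : ℝ^d → ℝ be differentiable and L̃-smooth for some L̃ > 0, let θ₁ ∈ (0,1), θ₂ > 0, and set η = θ₂/((1 + θ₂)·θ₁). For any x, z, z⁺, g ∈ ℝ^d define y⁺ = x + θ₁·(z⁺ − z). Then (1/θ₁)·(f(y⁺) − f(x)) − (θ₂/(2L̃θ₁))·‖g − ∇f(x)‖² ≤ (L̃/(2η))·‖z⁺ − z‖² + ⟨g, z⁺ − z⟩. -/
open scoped RealInnerProductSpace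

/-!
The smoothness bound at `x` along `y⁺ - x = θ₁ • (z⁺ - z)` bounds the difference quotient by
`⟪∇f(x), z⁺ - z⟫ + (L̃θ₁/2)‖z⁺ - z‖²`. Young's inequality with weight `θ₂/(L̃θ₁)` trades
`⟪∇f(x) - g, z⁺ - z⟫` for the variance term `θ₂/(2L̃θ₁)‖g - ∇f(x)‖²` plus `L̃θ₁/(2θ₂)‖z⁺ - z‖²`,
and the two quadratic coefficients add up to `L̃/(2η)`.
-/

section

variable {E : Type*} [NormedAddCommGroup E] [InnerProductSpace ℝ E]

theorem real_inner_le_young {ε : ℝ} (hε : 0 < ε) (u v : E) :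
    ⟪u, v⟫ ≤ ε / 2 * ‖u‖ ^ 2 + 1 / (2 * ε) * ‖v‖ ^ 2 := by
  have amgm : 2 * ε * (‖u‖ * ‖v‖) ≤ ε ^ 2 * ‖u‖ ^ 2 + ‖v‖ ^ 2 := by
    nlinarith [sq_nonneg (ε * ‖u‖ - ‖v‖)]
  calc ⟪u, v⟫ ≤ ‖u‖ * ‖v‖ := real_inner_le_norm u v
    _ ≤ ε / 2 * ‖u‖ ^ 2 + 1 / (2 * ε) * ‖v‖ ^ 2 := by
      field_simp
      linarith

theorem difference_quotient_le_of_quadratic_upper_bound {f : E → ℝ} {x a : E} {L t : ℝ}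
    (hf : ∀ y, f y ≤ f x + ⟪a, y - x⟫ + L / 2 * ‖y - x‖ ^ 2) (ht : 0 < t) (w : E) :
    1 / t * (f (x + t • w) - f x) ≤ ⟪a, w⟫ + L * t / 2 * ‖w‖ ^ 2 := by
  have step := hf (x + t • w)
  rw [add_sub_cancel_left, real_inner_smul_right, norm_smul, Real.norm_of_nonneg ht.le] at step
  rw [one_div_mul_eq_div, div_le_iff₀ ht]
  nlinarith [step]

end

theorem dhpl_katyusha_y_update_inequality_general
    {d : ℕ} {Ltil θ₁ θ₂ η : ℝ} (hL : 0 < Ltil)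
    (hθ₁ : θ₁ ∈ Set.Ioo (0 : ℝ) 1) (hθ₂ : 0 < θ₂)
    (hη : η = θ₂ / ((1 + θ₂) * θ₁))
    (f : EuclideanSpace ℝ (Fin d) → ℝ)
    (hsmooth : ∀ u v : EuclideanSpace ℝ (Fin d),
      f v ≤ f u + ⟪gradient f u, v - u⟫ + Ltil / 2 * ‖v - u‖ ^ 2)
    (x z zplus g yplus : EuclideanSpace ℝ (Fin d))
    (hyplus : yplus = x + θ₁ • (zplus - z)) :
    (1 / θ₁) * (f yplus - f x) - θ₂ / (2 * Ltil * θ₁) * ‖g - gradient f x‖ ^ 2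
      ≤ Ltil / (2 * η) * ‖zplus - z‖ ^ 2 + ⟪g, zplus - z⟫ := by
  obtain ⟨hθ₁, -⟩ := hθ₁
  subst hyplus hη
  have descent := difference_quotient_le_of_quadratic_upper_bound (hsmooth x) hθ₁ (zplus - z)
  have young := real_inner_le_young (show 0 < θ₂ / (Ltil * θ₁) by positivity)
    (gradient f x - g) (zplus - z)
  rw [inner_sub_left, norm_sub_rev (gradient f x)] at young
  have hvariance : θ₂ / (Ltil * θ₁) / 2 = θ₂ / (2 * Ltil * θ₁) := by ring
  have hcoeff : Ltil / (2 * (θ₂ / ((1 + θ₂) * θ₁)))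
      = 1 / (2 * (θ₂ / (Ltil * θ₁))) + Ltil * θ₁ / 2 := by
    field_simp
  rw [hvariance] at young
  rw [hcoeff]
  linarith

/-- **The y-update (mirror-descent/momentum) inequality of the DHPL-Katyusha analysis**, in
the case where the efficient Lipschitz constant `L̃` is the smoothness constant of `f`:
if `f : ℝ^d → ℝ` is differentiable and `L̃`-smooth, `θ₁ ∈ (0,1)`, `θ₂ > 0`,
`η = θ₂/((1 + θ₂)·θ₁)` and `y⁺ = x + θ₁·(z⁺ − z)`, then
`(1/θ₁)·(f(y⁺) − f(x)) − (θ₂/(2L̃θ₁))·‖g − ∇f(x)‖²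
  ≤ (L̃/(2η))·‖z⁺ − z‖² + ⟨g, z⁺ − z⟩`. -/
theorem dhpl_katyusha_y_update_inequality
    {d : ℕ} {Ltil θ₁ θ₂ η : ℝ} (hL : 0 < Ltil)
    (hθ₁ : θ₁ ∈ Set.Ioo (0 : ℝ) 1) (hθ₂ : 0 < θ₂)
    (hη : η = θ₂ / ((1 + θ₂) * θ₁))
    (f : EuclideanSpace ℝ (Fin d) → ℝ)
    (hdiff : Differentiable ℝ f)
    (hsmooth : ∀ u v : EuclideanSpace ℝ (Fin d),
      f v ≤ f u + ⟪gradient f u, v - u⟫ + Ltil / 2 * ‖v - u‖ ^ 2)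
    (x z zplus g yplus : EuclideanSpace ℝ (Fin d))
    (hyplus : yplus = x + θ₁ • (zplus - z)) :
    (1 / θ₁) * (f yplus - f x) - θ₂ / (2 * Ltil * θ₁) * ‖g - gradient f x‖ ^ 2
      ≤ Ltil / (2 * η) * ‖zplus - z‖ ^ 2 + ⟪g, zplus - z⟫ :=
  dhpl_katyusha_y_update_inequality_general hL hθ₁ hθ₂ hη f hsmooth x z zplus g yplus hyplus
end

section
/- Let f : ℝ^d → ℝ be differentiable and L-smooth for some L > 0, let 0 < L̃ ≤ L, let θ₁ ∈ (0,1), θ₂ > 0, and set η = (L̃/L)·θ₂/((1 + θ₂)·θ₁). For any x, z, z⁺, g ∈ ℝ^d define y⁺ = x + θ₁·(z⁺ − z). Then (1/θ₁)·(f(y⁺) − f(x)) − (θ₂/(2L̃θ₁))·‖g − ∇f(x)‖² ≤ (L̃/(2η))·‖z⁺ − z‖² + ⟨g, z⁺ − z⟩. -/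
open scoped RealInnerProductSpace

/-- **The y-update (mirror-descent/momentum) inequality of the DHPL-Katyusha analysis**, in
the case where the efficient Lipschitz constant `L̃` is at most the smoothness constant `L`
of `f`, with the rescaled step size `η = (L̃/L)·θ₂/((1 + θ₂)·θ₁)`:
if `f : ℝ^d → ℝ` is differentiable and `L`-smooth, `0 < L̃ ≤ L`, `θ₁ ∈ (0,1)`, `θ₂ > 0`, and
`y⁺ = x + θ₁·(z⁺ − z)`, then
`(1/θ₁)·(f(y⁺) − f(x)) − (θ₂/(2L̃θ₁))·‖g − ∇f(x)‖²
  ≤ (L̃/(2η))·‖z⁺ − z‖² + ⟨g, z⁺ − z⟩`. -/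
theorem dhpl_katyusha_y_update_inequality_small_Ltil
    {d : ℕ} {L Ltil θ₁ θ₂ η : ℝ} (hL : 0 < L) (hLtil : 0 < Ltil) (hLtilL : Ltil ≤ L)
    (hθ₁ : θ₁ ∈ Set.Ioo (0 : ℝ) 1) (hθ₂ : 0 < θ₂)
    (hη : η = (Ltil / L) * θ₂ / ((1 + θ₂) * θ₁))
    (f : EuclideanSpace ℝ (Fin d) → ℝ)
    (hdiff : Differentiable ℝ f)
    (hsmooth : ∀ u v : EuclideanSpace ℝ (Fin d),
      f v ≤ f u + ⟪gradient f u, v - u⟫ + L / 2 * ‖v - u‖ ^ 2)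
    (x z zplus g yplus : EuclideanSpace ℝ (Fin d))
    (hyplus : yplus = x + θ₁ • (zplus - z)) :
    (1 / θ₁) * (f yplus - f x) - θ₂ / (2 * Ltil * θ₁) * ‖g - gradient f x‖ ^ 2
      ≤ Ltil / (2 * η) * ‖zplus - z‖ ^ 2 + ⟪g, zplus - z⟫ := by
  obtain ⟨hθ₁0, hθ₁1⟩ := hθ₁
  set w := zplus - z with hw
  have hyx : yplus - x = θ₁ • w := by rw [hyplus]; abel
  have h1 := hsmooth x yplus
  rw [hyx] at h1
  have hinner : ⟪gradient f x, θ₁ • w⟫ = θ₁ * ⟪gradient f x, w⟫ :=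
    real_inner_smul_right _ _ _
  have hnorm : ‖θ₁ • w‖ ^ 2 = θ₁ ^ 2 * ‖w‖ ^ 2 := by
    rw [norm_smul, Real.norm_eq_abs, abs_of_pos hθ₁0]; ring
  rw [hinner, hnorm] at h1
  have hI : ⟪gradient f x - g, w⟫ ≤ ‖g - gradient f x‖ * ‖w‖ := by
    calc ⟪gradient f x - g, w⟫ ≤ ‖gradient f x - g‖ * ‖w‖ := real_inner_le_norm _ _
    _ = ‖g - gradient f x‖ * ‖w‖ := by rw [norm_sub_rev]
  have hsplit : ⟪gradient f x, w⟫ = ⟪g, w⟫ + ⟪gradient f x - g, w⟫ := by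
    rw [inner_sub_left]; ring
  rw [hsplit] at h1
  have hη' : Ltil / (2 * η) = L * (1 + θ₂) * θ₁ / (2 * θ₂) := by
    rw [hη]; field_simp
  rw [hη', ← sub_nonneg]
  have hD : (0:ℝ) < 2 * Ltil * θ₁ * θ₂ := by positivity
  have key : (0:ℝ) ≤ (L * (1 + θ₂) * θ₁ ^ 2 * Ltil) * ‖w‖ ^ 2
      + 2 * Ltil * θ₂ * θ₁ * ⟪g, w⟫
      - ((f yplus - f x) * (2 * Ltil * θ₂) - θ₂ ^ 2 * ‖g - gradient f x‖ ^ 2) := by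
    nlinarith [sq_nonneg (θ₂ * ‖g - gradient f x‖ - Ltil * θ₁ * ‖w‖),
      mul_le_mul_of_nonneg_right hLtilL
        (mul_nonneg (mul_nonneg hLtil.le (sq_nonneg θ₁)) (sq_nonneg ‖w‖)),
      mul_le_mul_of_nonneg_left hI (by positivity : (0:ℝ) ≤ 2 * Ltil * θ₂ * θ₁),
      mul_le_mul_of_nonneg_left h1 (by positivity : (0:ℝ) ≤ 2 * Ltil * θ₂)]
  have heq : (L * (1 + θ₂) * θ₁ / (2 * θ₂) * ‖w‖ ^ 2 + ⟪g, w⟫)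
      - (1 / θ₁ * (f yplus - f x) - θ₂ / (2 * Ltil * θ₁) * ‖g - gradient f x‖ ^ 2)
      = ((L * (1 + θ₂) * θ₁ ^ 2 * Ltil) * ‖w‖ ^ 2
      + 2 * Ltil * θ₂ * θ₁ * ⟪g, w⟫
      - ((f yplus - f x) * (2 * Ltil * θ₂) - θ₂ ^ 2 * ‖g - gradient f x‖ ^ 2))
      / (2 * Ltil * θ₁ * θ₂) := by
    field_simp
  rw [heq]
  exact div_nonneg key hD.le
end

section
/- Let f : ℝ^d → ℝ be differentiable, μ-strongly convex and L̃-smooth with 0 < μ ≤ L̃, and let x* be a minimizer of f. Let θ₁, θ₂ ∈ (0,1) with θ₁ + θ₂ ≤ 1, p ∈ (0,1], σ = μ/L̃, η = θ₂/((1 + θ₂)·θ₁). Fix z, w, y ∈ ℝ^d and set x = θ₁·z + θ₂·w + (1 − θ₁ − θ₂)·y. On a probability space, let g be a square-integrable random vector in ℝ^d with E[g] = ∇f(x) and E[‖g − ∇f(x)‖²] ≤ 2L̃·(f(w) − f(x) − ⟨∇f(x), w − x⟩), and let B be a Bernoulli random variable with P(B = 1) = p, independent of g. Define the random vectors z⁺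 = (1/(1 + ησ))·(ησ·x + z − (η/L̃)·g), y⁺ = x + θ₁·(z⁺ − z), and w⁺ = y if B = 1 and w⁺ = w if B = 0. Define Z(v) = (L̃(1 + ησ)/(2η))·‖v − x*‖², Y(v) = (1/θ₁)·(f(v) − f(x*)), W(v) = (θ₂(1 + θ₁)/(pθ₁))·(f(v) − f(x*)). Then E[Z(z⁺) + Y(y⁺) + W(w⁺)] ≤ (1/(1 + ησ))·Z(z) + (1 − θ₁(1 − θ₂))·Y(y) + (1 − pθ₁/(1 + θ₁))·W(w). -/
/-!
The update `z⁺` is a proximal step, so `(L̃/η) (z - z⁺) + μ (x - z⁺) = g`, and the three-point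
identity expresses `⟪g, z⁺ - x*⟫` through `‖z - x*‖²`, `‖x - x*‖²` and `‖z⁺ - x*‖²`. Smoothness
along `y⁺ - x = θ₁ (z⁺ - z)`, together with Young's inequality with weight `L̃θ₁/θ₂` on the noise
`⟪∇f(x) - g, z⁺ - z⟫`, produces `‖z⁺ - z‖²` terms that cancel exactly because
`L̃/η = L̃θ₁ + L̃θ₁/θ₂`. Taking expectations replaces `g` by `∇f(x)` and the noise by the
variance bound. Finally, writing `θ₁ (x* - z)` through the coupling
`x = θ₁ z + θ₂ w + (1 - θ₁ - θ₂) y` and using strong convexity at `x`, the Bregman term of `w`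
coming from the variance cancels against `θ₂ ⟪∇f(x), w - x⟫`, and what remains is an identity
between the coefficients.
-/

open MeasureTheory ProbabilityTheory
open scoped RealInnerProductSpace ENNReal

section InnerProductSpace
variable {E : Type*} [NormedAddCommGroup E] [InnerProductSpace ℝ E]

theorem real_inner_le_norm_sq_div_add {β : ℝ} (hβ : 0 < β) (a b : E) :
    ⟪a, b⟫ ≤ ‖a‖ ^ 2 / (2 * β) + β / 2 * ‖b‖ ^ 2 := by
  have h := norm_sub_sq_real a (β • b)
  rw [real_inner_smul_right, norm_smul, mul_pow, Real.norm_eq_abs, sq_abs] at h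
  rw [div_add' _ _ _ (by positivity), le_div_iff₀ (by positivity)]
  linear_combination h + sq_nonneg ‖a - β • b‖

theorem two_mul_inner_sub_sub (a b c : E) :
    2 * ⟪a - b, b - c⟫ = ‖a - c‖ ^ 2 - ‖a - b‖ ^ 2 - ‖b - c‖ ^ 2 := by
  have h := norm_add_sq_real (a - b) (b - c)
  rw [sub_add_sub_cancel] at h
  linarith

/-- First-order optimality of `zp = argmin_v (s ⟪g, v⟫ + c/2 ‖v - x‖² + 1/2 ‖v - z‖²)`. -/
theorem eq_inv_smul_sub_add_div_smul_sub {s c : ℝ} (hs : s ≠ 0) (hc : 1 + c ≠ 0) {x z g zp : E}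
    (h : zp = (1 / (1 + c)) • (c • x + z - s • g)) :
    g = s⁻¹ • (z - zp) + (c / s) • (x - zp) := by
  have h1 : (1 + c) • zp = c • x + z - s • g := by
    rw [h, smul_smul, mul_one_div_cancel hc, one_smul]
  linear_combination (norm := module) s⁻¹ • h1 - inv_mul_cancel₀ hs • g

theorem two_mul_inner_sub_of_eq_smul_sub_add_smul_sub {a m : ℝ} {x z zp g : E}
    (hg : g = a • (z - zp) + m • (x - zp)) (u : E) :
    2 * ⟪g, zp - u⟫ = a * (‖z - u‖ ^ 2 - ‖z - zp‖ ^ 2 - ‖zp - u‖ ^ 2)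
      + m * (‖x - u‖ ^ 2 - ‖x - zp‖ ^ 2 - ‖zp - u‖ ^ 2) := by
  rw [hg, inner_add_left, real_inner_smul_left, real_inner_smul_left]
  linear_combination a * two_mul_inner_sub_sub z zp u + m * two_mul_inner_sub_sub x zp u

/-- With `a = L θ₁ + β`, the `‖zp - z‖²` terms coming from smoothness and from Young's inequality
with weight `β` cancel against those of the three-point identity. -/
theorem prox_step_descent {f : E → ℝ} {L θ₁ β a m : ℝ} (hθ₁ : 0 < θ₁) (hβ : 0 < β) (hm : 0 ≤ m)
    (ha : a = L * θ₁ + β) {x z zp yp g gx : E}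
    (hg : g = a • (z - zp) + m • (x - zp)) (hyp : yp = x + θ₁ • (zp - z))
    (hsmooth : f yp ≤ f x + ⟪gx, yp - x⟫ + L / 2 * ‖yp - x‖ ^ 2) (u : E) :
    (a + m) / 2 * ‖zp - u‖ ^ 2 + (f yp - f x) / θ₁
      ≤ a / 2 * ‖z - u‖ ^ 2 + m / 2 * ‖x - u‖ ^ 2 + ⟪u - z, g⟫ + ‖g - gx‖ ^ 2 / (2 * β) := by
  have hstep : (f yp - f x) / θ₁ ≤ ⟪gx, zp - z⟫ + L * θ₁ / 2 * ‖zp - z‖ ^ 2 := by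
    have hyx : yp - x = θ₁ • (zp - z) := by rw [hyp, add_sub_cancel_left]
    rw [hyx, real_inner_smul_right, norm_smul, Real.norm_of_nonneg hθ₁.le] at hsmooth
    rw [div_le_iff₀ hθ₁]
    linarith
  have hsplit : ⟪gx, zp - z⟫ = ⟪g, zp - u⟫ + ⟪u - z, g⟫ + ⟪gx - g, zp - z⟫ := by
    simp only [inner_sub_left, inner_sub_right]
    rw [real_inner_comm z g, real_inner_comm u g]
    ring
  have hyoung := real_inner_le_norm_sq_div_add hβ (gx - g) (zp - z)
  rw [norm_sub_rev gx] at hyoung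
  have hthree := two_mul_inner_sub_of_eq_smul_sub_add_smul_sub hg u
  rw [norm_sub_rev z zp] at hthree
  linear_combination hstep + hsplit + hthree / 2
    + hyoung + (m / 2) * sq_nonneg ‖x - zp‖ + (-‖zp - z‖ ^ 2 / 2) * ha

theorem inner_sub_le_of_eq_convex_comb {f : E → ℝ} {μ θ₁ θ₂ : ℝ} (hμ : 0 ≤ μ) (hθ₁ : 0 ≤ θ₁)
    (hθ : θ₁ + θ₂ ≤ 1) {x z w y gx : E} (hx : x = θ₁ • z + θ₂ • w + (1 - θ₁ - θ₂) • y)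
    (hstrong : ∀ v, f v ≥ f x + ⟪gx, v - x⟫ + μ / 2 * ‖v - x‖ ^ 2) (u : E) :
    θ₁ * ⟪gx, u - z⟫ ≤ θ₁ * (f u - f x - μ / 2 * ‖u - x‖ ^ 2) + θ₂ * ⟪gx, w - x⟫
      + (1 - θ₁ - θ₂) * (f y - f x) := by
  have hsplit : θ₁ * ⟪gx, u - z⟫
      = θ₁ * ⟪gx, u - x⟫ + θ₂ * ⟪gx, w - x⟫ + (1 - θ₁ - θ₂) * ⟪gx, y - x⟫ := by
    simp only [← real_inner_smul_right, ← inner_add_right]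
    congr 1
    rw [hx]
    module
  have hy : ⟪gx, y - x⟫ ≤ f y - f x := by
    linear_combination hstrong y + (μ / 2) * sq_nonneg ‖y - x‖
  linear_combination hsplit + θ₁ * hstrong u
    + mul_le_mul_of_nonneg_left hy (by linarith : 0 ≤ 1 - θ₁ - θ₂)
end InnerProductSpace

theorem ite_bool_eq_indicator_add {Ω : Type*} (B : Ω → Bool) (b₁ b₀ : ℝ) :
    (fun ω => if B ω = true then b₁ else b₀)
      = fun ω => {ω | B ω = true}.indicator (fun _ => b₁ - b₀) ω + b₀ := by
  ext ω
  by_cases h : B ω = true <;> simp [h]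

section Expectation
variable {Ω : Type*} [MeasurableSpace Ω] {P : Measure Ω}
  {E : Type*} [NormedAddCommGroup E] [InnerProductSpace ℝ E] [CompleteSpace E]

theorem integrable_ite_bool [IsFiniteMeasure P] {B : Ω → Bool} (hB : Measurable B) (b₁ b₀ : ℝ) :
    Integrable (fun ω => if B ω = true then b₁ else b₀) P := by
  rw [ite_bool_eq_indicator_add]
  exact ((integrable_const _).indicator (hB (measurableSet_singleton true))).add
    (integrable_const _)

theorem integral_ite_bool [IsProbabilityMeasure P] {B : Ω → Bool} (hB : Measurable B)
    (b₁ b₀ : ℝ) :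
    ∫ ω, (if B ω = true then b₁ else b₀) ∂P
      = P.real {ω | B ω = true} * b₁ + (1 - P.real {ω | B ω = true}) * b₀ := by
  have hs : MeasurableSet {ω | B ω = true} := hB (measurableSet_singleton true)
  rw [ite_bool_eq_indicator_add, integral_add ((integrable_const _).indicator hs)
    (integrable_const _), integral_indicator_const _ hs, integral_const, probReal_univ,
    smul_eq_mul, one_smul]
  ring

/-- Bounding the nonnegative `Φ` by an integrable majorant avoids needing `Φ` to be integrable. -/
theorem integral_le_of_le_inner_add_norm_sq_add_ite [IsProbabilityMeasure P] {g : Ω → E}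
    (hg : MemLp g 2 P) {B : Ω → Bool} (hB : Measurable B) {Φ : Ω → ℝ} (hΦ : ∀ ω, 0 ≤ Φ ω)
    {K c b₁ b₀ : ℝ} {v m : E}
    (h : ∀ ω, Φ ω ≤ K + ⟪v, g ω⟫ + c * ‖g ω - m‖ ^ 2 + (if B ω = true then b₁ else b₀)) :
    ∫ ω, Φ ω ∂P ≤ K + ⟪v, ∫ ω, g ω ∂P⟫ + c * ∫ ω, ‖g ω - m‖ ^ 2 ∂P
      + (P.real {ω | B ω = true} * b₁ + (1 - P.real {ω | B ω = true}) * b₀) := by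
  have hg1 : Integrable g P := hg.integrable one_le_two
  have hsq : Integrable (fun ω => ‖g ω - m‖ ^ 2) P :=
    (hg.sub (memLp_const m)).integrable_norm_pow two_ne_zero
  have hite := integrable_ite_bool (P := P) hB b₁ b₀
  have hinner : Integrable (fun ω => K + ⟪v, g ω⟫) P :=
    (integrable_const K).add (hg1.const_inner v)
  have hquad : Integrable (fun ω => K + ⟪v, g ω⟫ + c * ‖g ω - m‖ ^ 2) P :=
    hinner.add (hsq.const_mul c)
  refine (integral_mono_of_nonneg (.of_forall hΦ) (hquad.add hite) (.of_forall h)).trans_eq ?_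
  rw [integral_add' hquad hite, integral_add hinner (hsq.const_mul c),
    integral_add (integrable_const K) (hg1.const_inner v), integral_const, probReal_univ,
    one_smul, integral_inner hg1, integral_const_mul, integral_ite_bool hB]
end Expectation

theorem dhpl_katyusha_lyapunov_contraction_general
    {d : ℕ} {μ Ltil : ℝ} (hμ : 0 < μ) (hμL : μ ≤ Ltil)
    (f : EuclideanSpace ℝ (Fin d) → ℝ)
    (hstrong : ∀ u v : EuclideanSpace ℝ (Fin d),
      f v ≥ f u + ⟪gradient f u, v - u⟫ + μ / 2 * ‖v - u‖ ^ 2)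
    (hsmooth : ∀ u v : EuclideanSpace ℝ (Fin d),
      f v ≤ f u + ⟪gradient f u, v - u⟫ + Ltil / 2 * ‖v - u‖ ^ 2)
    (xstar : EuclideanSpace ℝ (Fin d)) (hmin : ∀ v, f xstar ≤ f v)
    {θ₁ θ₂ p σ η : ℝ}
    (hθ₁ : θ₁ ∈ Set.Ioo (0 : ℝ) 1) (hθ₂ : θ₂ ∈ Set.Ioo (0 : ℝ) 1) (hθ : θ₁ + θ₂ ≤ 1)
    (hp : p ∈ Set.Ioc (0 : ℝ) 1)
    (hσ : σ = μ / Ltil) (hη : η = θ₂ / ((1 + θ₂) * θ₁))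
    (z w y x : EuclideanSpace ℝ (Fin d))
    (hx : x = θ₁ • z + θ₂ • w + (1 - θ₁ - θ₂) • y)
    {Ω : Type*} [MeasureSpace Ω] [IsProbabilityMeasure (ℙ : Measure Ω)]
    (g : Ω → EuclideanSpace ℝ (Fin d)) (hg2 : MemLp g 2 ℙ)
    (hgmean : ∫ ω, g ω ∂ℙ = gradient f x)
    (hgvar : ∫ ω, ‖g ω - gradient f x‖ ^ 2 ∂ℙ
      ≤ 2 * Ltil * (f w - f x - ⟪gradient f x, w - x⟫))
    (B : Ω → Bool) (hBmeas : Measurable B)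
    (hBp : ℙ {ω | B ω = true} = ENNReal.ofReal p)
    (zplus yplus wplus : Ω → EuclideanSpace ℝ (Fin d))
    (hzplus : ∀ ω, zplus ω = (1 / (1 + η * σ)) • ((η * σ) • x + z - (η / Ltil) • g ω))
    (hyplus : ∀ ω, yplus ω = x + θ₁ • (zplus ω - z))
    (hwplus : ∀ ω, wplus ω = if B ω = true then y else w)
    (Z Y W : EuclideanSpace ℝ (Fin d) → ℝ)
    (hZ : ∀ v, Z v = Ltil * (1 + η * σ) / (2 * η) * ‖v - xstar‖ ^ 2)
    (hY : ∀ v, Y v = (1 / θ₁) * (f v - f xstar))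
    (hW : ∀ v, W v = θ₂ * (1 + θ₁) / (p * θ₁) * (f v - f xstar)) :
    ∫ ω, (Z (zplus ω) + Y (yplus ω) + W (wplus ω)) ∂ℙ
      ≤ (1 / (1 + η * σ)) * Z z + (1 - θ₁ * (1 - θ₂)) * Y y
        + (1 - p * θ₁ / (1 + θ₁)) * W w := by
  obtain ⟨hθ₁, -⟩ := hθ₁
  obtain ⟨hθ₂, -⟩ := hθ₂
  obtain ⟨hp, -⟩ := hp
  have hL : 0 < Ltil := hμ.trans_le hμL
  have hσ0 : 0 < σ := by rw [hσ]; positivity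
  have hη0 : 0 < η := by rw [hη]; positivity
  have hβ : 0 < Ltil * θ₁ / θ₂ := by positivity
  have ha : Ltil / η = Ltil * θ₁ + Ltil * θ₁ / θ₂ := by rw [hη]; field_simp; ring
  have hZ' : ∀ v, Z v = (Ltil / η + μ) / 2 * ‖v - xstar‖ ^ 2 := by
    intro v; rw [hZ, hσ]; field_simp
  have hpt : ∀ ω, Z (zplus ω) + Y (yplus ω) + W (wplus ω)
      ≤ (f x - f xstar) / θ₁ + Ltil / η / 2 * ‖z - xstar‖ ^ 2 + μ / 2 * ‖x - xstar‖ ^ 2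
        + ⟪xstar - z, g ω⟫ + 1 / (2 * (Ltil * θ₁ / θ₂)) * ‖g ω - gradient f x‖ ^ 2
        + (if B ω = true then W y else W w) := by
    intro ω
    have hprox := eq_inv_smul_sub_add_div_smul_sub (by positivity) (by positivity) (hzplus ω)
    rw [inv_div, show η * σ / (η / Ltil) = μ by rw [hσ]; field_simp] at hprox
    have := prox_step_descent hθ₁ hβ hμ.le ha hprox (hyplus ω) (hsmooth x _) xstar
    rw [hZ', hY, hwplus, ← apply_ite W]
    linear_combination this
  have hnn : ∀ ω, 0 ≤ Z (zplus ω) + Y (yplus ω) + W (wplus ω) := fun ω => by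
    rw [hZ, hY, hW]
    have hy := sub_nonneg.mpr (hmin (yplus ω))
    have hw := sub_nonneg.mpr (hmin (wplus ω))
    positivity
  have hE := integral_le_of_le_inner_add_norm_sq_add_ite hg2 hBmeas hnn hpt
  rw [hgmean, measureReal_def, hBp, ENNReal.toReal_ofReal hp.le] at hE
  have hcoup := inner_sub_le_of_eq_convex_comb hμ.le hθ₁.le hθ hx (hstrong x) xstar
  rw [real_inner_comm, norm_sub_rev] at hcoup
  rw [hW y, hW w] at hE
  rw [hZ z, hY y, hW w]
  linear_combination (norm := (field_simp; ring_nf; exact le_rfl))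
    hE + (1 / θ₁) * hcoup + (1 / (2 * (Ltil * θ₁ / θ₂))) * hgvar

/-- **One-iteration Lyapunov contraction of the DHPL-Katyusha algorithm**: let
`f : ℝ^d → ℝ` be differentiable, `μ`-strongly convex and `L̃`-smooth with `0 < μ ≤ L̃`,
with minimizer `x*`; let `θ₁, θ₂ ∈ (0,1)` with `θ₁ + θ₂ ≤ 1`, `p ∈ (0,1]`, `σ = μ/L̃`,
`η = θ₂/((1 + θ₂)·θ₁)`, and `x = θ₁·z + θ₂·w + (1 − θ₁ − θ₂)·y`. If `g` is a
square-integrable random vector with `E[g] = ∇f(x)` and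
`E[‖g − ∇f(x)‖²] ≤ 2L̃·(f(w) − f(x) − ⟨∇f(x), w − x⟩)`, and `B` is a Bernoulli(`p`) random
variable independent of `g`, then with `z⁺ = (1/(1 + ησ))·(ησ·x + z − (η/L̃)·g)`,
`y⁺ = x + θ₁·(z⁺ − z)`, `w⁺ = y` if `B = 1` and `w` otherwise, and
`Z(v) = (L̃(1 + ησ)/(2η))·‖v − x*‖²`, `Y(v) = (1/θ₁)·(f(v) − f(x*))`,
`W(v) = (θ₂(1 + θ₁)/(pθ₁))·(f(v) − f(x*))`, one has
`E[Z(z⁺) + Y(y⁺) + W(w⁺)] ≤ (1/(1 + ησ))·Z(z) + (1 − θ₁(1 − θ₂))·Y(y)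
  + (1 − pθ₁/(1 + θ₁))·W(w)`. -/
theorem dhpl_katyusha_lyapunov_contraction
    {d : ℕ} {μ Ltil : ℝ} (hμ : 0 < μ) (hμL : μ ≤ Ltil)
    (f : EuclideanSpace ℝ (Fin d) → ℝ)
    (hdiff : Differentiable ℝ f)
    (hstrong : ∀ u v : EuclideanSpace ℝ (Fin d),
      f v ≥ f u + ⟪gradient f u, v - u⟫ + μ / 2 * ‖v - u‖ ^ 2)
    (hsmooth : ∀ u v : EuclideanSpace ℝ (Fin d),
      f v ≤ f u + ⟪gradient f u, v - u⟫ + Ltil / 2 * ‖v - u‖ ^ 2)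
    (xstar : EuclideanSpace ℝ (Fin d)) (hmin : ∀ v, f xstar ≤ f v)
    {θ₁ θ₂ p σ η : ℝ}
    (hθ₁ : θ₁ ∈ Set.Ioo (0 : ℝ) 1) (hθ₂ : θ₂ ∈ Set.Ioo (0 : ℝ) 1) (hθ : θ₁ + θ₂ ≤ 1)
    (hp : p ∈ Set.Ioc (0 : ℝ) 1)
    (hσ : σ = μ / Ltil) (hη : η = θ₂ / ((1 + θ₂) * θ₁))
    (z w y x : EuclideanSpace ℝ (Fin d))
    (hx : x = θ₁ • z + θ₂ • w + (1 - θ₁ - θ₂) • y)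
    {Ω : Type*} [MeasureSpace Ω] [IsProbabilityMeasure (ℙ : Measure Ω)]
    (g : Ω → EuclideanSpace ℝ (Fin d)) (hg2 : MemLp g 2 ℙ)
    (hgmean : ∫ ω, g ω ∂ℙ = gradient f x)
    (hgvar : ∫ ω, ‖g ω - gradient f x‖ ^ 2 ∂ℙ
      ≤ 2 * Ltil * (f w - f x - ⟪gradient f x, w - x⟫))
    (B : Ω → Bool) (hBmeas : Measurable B)
    (hBp : ℙ {ω | B ω = true} = ENNReal.ofReal p)
    (hindep : IndepFun g B ℙ)
    (zplus yplus wplus : Ω → EuclideanSpace ℝ (Fin d))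
    (hzplus : ∀ ω, zplus ω = (1 / (1 + η * σ)) • ((η * σ) • x + z - (η / Ltil) • g ω))
    (hyplus : ∀ ω, yplus ω = x + θ₁ • (zplus ω - z))
    (hwplus : ∀ ω, wplus ω = if B ω = true then y else w)
    (Z Y W : EuclideanSpace ℝ (Fin d) → ℝ)
    (hZ : ∀ v, Z v = Ltil * (1 + η * σ) / (2 * η) * ‖v - xstar‖ ^ 2)
    (hY : ∀ v, Y v = (1 / θ₁) * (f v - f xstar))
    (hW : ∀ v, W v = θ₂ * (1 + θ₁) / (p * θ₁) * (f v - f xstar)) :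
    ∫ ω, (Z (zplus ω) + Y (yplus ω) + W (wplus ω)) ∂ℙ
      ≤ (1 / (1 + η * σ)) * Z z + (1 - θ₁ * (1 - θ₂)) * Y y
        + (1 - p * θ₁ / (1 + θ₁)) * W w :=
  dhpl_katyusha_lyapunov_contraction_general hμ hμL f hstrong hsmooth xstar hmin hθ₁ hθ₂ hθ hp hσ hη
    z w y x hx g hg2 hgmean hgvar B hBmeas hBp zplus yplus wplus hzplus hyplus hwplus Z Y W hZ hY hW
end

section
/- Let σ ∈ (0,1] and β ≥ 1. Set p = 1/β, θ₂ = 1/2, θ₁ = min{√(2σβ/3), 1/2}, and η = θ₂/((1 + θ₂)·θ₁). Then max{ 1/(1 + ησ), 1 − θ₁·(1 − θ₂), 1 − p·θ₁/(1 + θ₁) } ≤ 1 − (1/10)·min{ √(σ/β), 1/β }. -/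
set_option maxHeartbeats 1000000 in
/-- **Per-iteration contraction factor of the DHPL-Katyusha Lyapunov function** under the
parameter choice of its complexity corollary: for `σ ∈ (0,1]` and `β ≥ 1`, with `p = 1/β`,
`θ₂ = 1/2`, `θ₁ = min{√(2σβ/3), 1/2}` and `η = θ₂/((1 + θ₂)·θ₁)`, one has
`max{1/(1 + ησ), 1 − θ₁(1 − θ₂), 1 − pθ₁/(1 + θ₁)} ≤ 1 − (1/10)·min{√(σ/β), 1/β}`. -/
theorem dhpl_katyusha_contraction_factor
    {σ β p θ₁ θ₂ η : ℝ} (hσ0 : 0 < σ) (hσ1 : σ ≤ 1) (hβ : 1 ≤ β)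
    (hp : p = 1 / β) (hθ₂ : θ₂ = 1 / 2)
    (hθ₁ : θ₁ = min (Real.sqrt (2 * σ * β / 3)) (1 / 2))
    (hη : η = θ₂ / ((1 + θ₂) * θ₁)) :
    max (1 / (1 + η * σ)) (max (1 - θ₁ * (1 - θ₂)) (1 - p * θ₁ / (1 + θ₁)))
      ≤ 1 - (1 / 10) * min (Real.sqrt (σ / β)) (1 / β) := by
  have hβ0 : (0:ℝ) < β := lt_of_lt_of_le one_pos hβ
  set a := Real.sqrt (2 * σ * β / 3) with ha_def
  set r := Real.sqrt (σ / β) with hr_def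
  set m := min r (1/β) with hm_def
  have ha0 : 0 ≤ a := Real.sqrt_nonneg _
  have hr0 : 0 ≤ r := Real.sqrt_nonneg _
  have ha2 : a ^ 2 = 2 * σ * β / 3 := by
    rw [ha_def, Real.sq_sqrt]; positivity
  have hr2 : r ^ 2 = σ / β := by
    rw [hr_def, Real.sq_sqrt]; positivity
  have hapos : 0 < a := by
    nlinarith [mul_pos hσ0 hβ0]
  have hθ₁pos : 0 < θ₁ := by
    rw [hθ₁]; exact lt_min hapos (by norm_num)
  have hθ₁a : θ₁ ≤ a := hθ₁ ▸ min_le_left _ _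
  have hθ₁half : θ₁ ≤ 1/2 := hθ₁ ▸ min_le_right _ _
  have hmr : m ≤ r := min_le_left _ _
  have hmβ : m ≤ 1/β := min_le_right _ _
  have hm0 : 0 ≤ m := le_min hr0 (by positivity)
  have hm1 : m ≤ 1 := hmβ.trans (by rw [div_le_one hβ0]; exact hβ)
  -- key fact (i): m * θ₁ ≤ σ
  have hkey1 : m * θ₁ ≤ σ := by
    have h1 : m * θ₁ ≤ r * a := mul_le_mul hmr hθ₁a hθ₁pos.le hr0
    have h2 : (r * a) ^ 2 = 2 * σ ^ 2 / 3 := by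
      rw [mul_pow, hr2, ha2]; field_simp
    nlinarith [mul_nonneg hr0 ha0, sq_nonneg (σ - r * a)]
  -- key fact (ii): m ≤ 5 * θ₁
  have hkey2 : m ≤ 5 * θ₁ := by
    have h5 : m / 5 ≤ θ₁ := by
      rw [hθ₁]
      refine le_min ?_ (by linarith)
      have hsq : (m / 5) ^ 2 ≤ a ^ 2 := by
        have hmm : m ^ 2 ≤ σ / β := by nlinarith
        have hσβ : σ / β ≤ σ * β := by
          rw [div_le_iff₀ hβ0]; nlinarith
        nlinarith
      nlinarith
    linarith
  -- key fact (iii): β * m ≤ 2 * θ₁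
  have hβm1 : β * m ≤ 1 := by
    have h := mul_le_mul_of_nonneg_left hmβ hβ0.le
    rwa [mul_one_div, div_self hβ0.ne'] at h
  have hkey3 : β * m ≤ 2 * θ₁ := by
    have h5 : β * m / 2 ≤ θ₁ := by
      rw [hθ₁]
      refine le_min ?_ (by linarith)
      have hmm : m ^ 2 ≤ σ / β := by
        rw [← hr2]; exact pow_le_pow_left₀ hm0 hmr 2
      have h2 : (β * m) ^ 2 ≤ σ * β := by
        have hb : β ^ 2 * (σ / β) = σ * β := by field_simp
        have := mul_le_mul_of_nonneg_left hmm (sq_nonneg β)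
        nlinarith
      have hsq : (β * m / 2) ^ 2 ≤ a ^ 2 := by
        rw [ha2]; nlinarith [mul_pos hσ0 hβ0]
      nlinarith [mul_nonneg hβ0.le hm0]
    linarith
  -- η * θ₁ = 1/3
  have hηθ : η * θ₁ = 1/3 := by
    rw [hη, hθ₂]; field_simp; ring
  have hησ : m / 3 ≤ η * σ := by
    have hq : η * σ * θ₁ = σ / 3 := by rw [mul_comm η σ, mul_assoc, hηθ]; ring
    nlinarith
  have hd : (0:ℝ) < 1 + η * σ := by nlinarith
  have hησ0 : 0 ≤ η * σ := le_trans (by linarith) hησ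
  refine max_le ?_ (max_le ?_ ?_)
  · rw [div_le_iff₀ hd]
    nlinarith [mul_le_mul_of_nonneg_right hm1 hησ0]
  · rw [hθ₂]; linarith
  · rw [hp]
    have hd2 : (0:ℝ) < 1 + θ₁ := by linarith
    have hβne : β ≠ 0 := hβ0.ne'
    have hdne : (1:ℝ) + θ₁ ≠ 0 := hd2.ne'
    have heq : 1 / β * θ₁ / (1 + θ₁) = θ₁ / (β * (1 + θ₁)) := by
      field_simp
    have hgoal : m / 10 ≤ θ₁ / (β * (1 + θ₁)) := by
      rw [le_div_iff₀ (mul_pos hβ0 hd2)]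
      nlinarith [mul_le_mul hkey3 (show 1 + θ₁ ≤ 3/2 by linarith) hd2.le
        (by linarith : (0:ℝ) ≤ 2 * θ₁)]
    rw [heq]; linarith
end
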